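/- Let A ∈ ℝ^{2×2}, B ∈ ℝ^{2×1}, C ∈ ℝ^{1×2}, D ∈ ℝ, let P ∈ ℝ^{2×2} be symmetric, let ρ > 0 and μ, λ > 0, and suppose the 3×3 matrix [[AᵀPA − ρ²P, AᵀPB],[BᵀPA, BᵀPB]] + [[C, D],[0_{1×2}, 1]]ᵀ [[−λ, 1],[1, −μ]] [[C, D],[0_{1×2}, 1]] is negative semidefinite. Let φ, φ⋆ ∈ ℝ^{2n} and u, u⋆ ∈ ℝ^n, set y = (C ⊗ I_n)φ + D u and y⋆ = (C ⊗ I_n)φ⋆ + D u⋆, and suppose the quadratic constraint −λ‖y − y⋆‖² + 2⟨y − y⋆, u − u⋆⟩ − μ‖u − u⋆‖² ≥ 0 holds. If additionally (A ⊗ I_n)φ⋆ + (B ⊗ I_n)u⋆ = φ⋆, then with φ⁺ = (A ⊗ I_n)φ + (B ⊗ I_n)u one has (φ⁺ − φ⋆)ᵀ(P ⊗ I_n)(φ⁺ − φ⋆) ≤ ρ² (φ − φ⋆)ᵀ(P ⊗ I_n)(φ − φ⋆). -/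

import Mathlib

open Matrix InnerProductSpace Kronecker

/-!
With `V e = eᵀ P e`, the quadratic form of the LMI matrix at the stacked vector `(e, w)` is
`V (A e + B w) - ρ² V e` plus the supply rate `-λ|y|² + 2⟨y, w⟩ - μ|w|²` at `y = C e + D w`.
So the LMI says that the Lyapunov increment is bounded by minus the supply rate. Tensoring
with `I_n` leaves the `n` coordinate slices uncoupled, so the same holds for the lifted system.
Applied to the errors `φ - φ⋆`, `u - u⋆` (which follow the same linear dynamics because `φ⋆` is a
fixed point), the nonnegative quadratic constraint gives the decrease.
-/

namespace Matrix

variable {R l m n : Type*} [Fintype m] [Fintype n]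

theorem kronecker_one_mulVec_apply [NonAssocSemiring R] [DecidableEq n] (M : Matrix l m R)
    (x : m × n → R) (j : l) (i : n) :
    ((M ⊗ₖ (1 : Matrix n n R)) *ᵥ x) (j, i) = (M *ᵥ fun k => x (k, i)) j := by
  simp [mulVec, dotProduct, Fintype.sum_prod_type, one_apply]

theorem kronecker_one_mulVec_slice [NonAssocSemiring R] [DecidableEq n] (M : Matrix l m R)
    (x : m × n → R) (i : n) :
    (fun j => ((M ⊗ₖ (1 : Matrix n n R)) *ᵥ x) (j, i)) = M *ᵥ fun k => x (k, i) :=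
  funext fun j => kronecker_one_mulVec_apply M x j i

theorem dotProduct_eq_sum_dotProduct_slices [AddCommMonoid R] [Mul R] (x y : m × n → R) :
    x ⬝ᵥ y = ∑ i, (fun j => x (j, i)) ⬝ᵥ fun j => y (j, i) :=
  Fintype.sum_prod_type_right _

theorem comp_snd_dotProduct_comp_snd [AddCommMonoid R] [Mul R] [Unique m] (x y : n → R) :
    (fun q : m × n => x q.2) ⬝ᵥ (fun q => y q.2) = x ⬝ᵥ y := by
  simp [dotProduct, Fintype.sum_prod_type]

theorem dotProduct_transpose_mul_mul_mulVec [CommSemiring R] {k : Type*} [Fintype k]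
    (X : Matrix k m R) (N : Matrix k k R) (Y : Matrix k n R) (x : m → R) (z : n → R) :
    x ⬝ᵥ (Xᵀ * N * Y) *ᵥ z = X *ᵥ x ⬝ᵥ N *ᵥ (Y *ᵥ z) := by
  rw [← mulVec_mulVec, ← mulVec_mulVec, dotProduct_mulVec, vecMul_transpose]

end Matrix

section Dissipation

variable {m p : Type*} [Fintype m] [Fintype p]

def supplyRate (lam μ : ℝ) (y w : p → ℝ) : ℝ :=
  -lam * (y ⬝ᵥ y) + 2 * (y ⬝ᵥ w) - μ * (w ⬝ᵥ w)

theorem supplyRate_eq_sum_slices {n : Type*} [Fintype n] (lam μ : ℝ) (y w : p × n → ℝ) :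
    supplyRate lam μ y w = ∑ i, supplyRate lam μ (fun k => y (k, i)) (fun k => w (k, i)) := by
  simp only [supplyRate, dotProduct_eq_sum_dotProduct_slices y,
    dotProduct_eq_sum_dotProduct_slices w, Finset.mul_sum, Finset.sum_add_distrib,
    Finset.sum_sub_distrib]

theorem supplyRate_ofLp {n : Type*} [Fintype n] (lam μ : ℝ) (y w : EuclideanSpace ℝ n) :
    supplyRate lam μ y w = -lam * ‖y‖ ^ 2 + 2 * ⟪y, w⟫_ℝ - μ * ‖w‖ ^ 2 := by
  rw [supplyRate, ← real_inner_self_eq_norm_sq, ← real_inner_self_eq_norm_sq,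
    EuclideanSpace.inner_eq_star_dotProduct, EuclideanSpace.inner_eq_star_dotProduct,
    EuclideanSpace.inner_eq_star_dotProduct, star_trivial, star_trivial,
    dotProduct_comm w.ofLp y.ofLp]

theorem supplyRate_comp_snd {k n : Type*} [Fintype k] [Unique k] [Fintype n] (lam μ : ℝ)
    (y w : n → ℝ) :
    supplyRate lam μ (fun q : k × n => y q.2) (fun q => w q.2) = supplyRate lam μ y w := by
  simp only [supplyRate, comp_snd_dotProduct_comp_snd]

variable (A : Matrix m m ℝ) (B : Matrix m p ℝ) (C : Matrix p m ℝ) (D : ℝ)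
  (P : Matrix m m ℝ) (ρ μ lam : ℝ)

theorem sumElim_dotProduct_fromBlocks_lyapunov_mulVec (e : m → ℝ) (w : p → ℝ) :
    Sum.elim e w ⬝ᵥ
        fromBlocks (Aᵀ * P * A - ρ ^ 2 • P) (Aᵀ * P * B) (Bᵀ * P * A) (Bᵀ * P * B) *ᵥ
          Sum.elim e w =
      (A *ᵥ e + B *ᵥ w) ⬝ᵥ P *ᵥ (A *ᵥ e + B *ᵥ w) - ρ ^ 2 * (e ⬝ᵥ P *ᵥ e) := by
  simp only [fromBlocks_mulVec, Function.comp_def, Sum.elim_inl, Sum.elim_inr,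
    sumElim_dotProduct_sumElim, sub_mulVec, dotProduct_add, dotProduct_sub, add_dotProduct,
    mulVec_add, dotProduct_transpose_mul_mul_mulVec, smul_mulVec, dotProduct_smul, smul_eq_mul]
  ring

variable [DecidableEq p]

theorem sumElim_dotProduct_fromBlocks_supplyRate_mulVec (y w : p → ℝ) :
    Sum.elim y w ⬝ᵥ fromBlocks (-lam • (1 : Matrix p p ℝ)) 1 1 (-μ • 1) *ᵥ Sum.elim y w =
      supplyRate lam μ y w := by
  simp only [fromBlocks_mulVec, Function.comp_def, Sum.elim_inl, Sum.elim_inr,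
    sumElim_dotProduct_sumElim, smul_mulVec, one_mulVec, dotProduct_add, dotProduct_smul,
    smul_eq_mul, supplyRate, dotProduct_comm w y]
  ring

def lmiMatrix : Matrix (m ⊕ p) (m ⊕ p) ℝ :=
  fromBlocks (Aᵀ * P * A - ρ ^ 2 • P) (Aᵀ * P * B) (Bᵀ * P * A) (Bᵀ * P * B) +
    (fromBlocks C (D • (1 : Matrix p p ℝ)) 0 (1 : Matrix p p ℝ))ᵀ *
    (fromBlocks (-lam • (1 : Matrix p p ℝ)) (1 : Matrix p p ℝ)
      (1 : Matrix p p ℝ) (-μ • (1 : Matrix p p ℝ))) *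
    (fromBlocks C (D • (1 : Matrix p p ℝ)) 0 (1 : Matrix p p ℝ))

theorem sumElim_dotProduct_lmiMatrix_mulVec (e : m → ℝ) (w : p → ℝ) :
    Sum.elim e w ⬝ᵥ lmiMatrix A B C D P ρ μ lam *ᵥ Sum.elim e w =
      (A *ᵥ e + B *ᵥ w) ⬝ᵥ P *ᵥ (A *ᵥ e + B *ᵥ w) - ρ ^ 2 * (e ⬝ᵥ P *ᵥ e) +
        supplyRate lam μ (C *ᵥ e + D • w) w := by
  have hL : fromBlocks C (D • (1 : Matrix p p ℝ)) 0 1 *ᵥ Sum.elim e w =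
      Sum.elim (C *ᵥ e + D • w) w := by
    simp [fromBlocks_mulVec, smul_mulVec]
  rw [lmiMatrix, add_mulVec, dotProduct_add, dotProduct_transpose_mul_mul_mulVec, hL,
    sumElim_dotProduct_fromBlocks_lyapunov_mulVec,
    sumElim_dotProduct_fromBlocks_supplyRate_mulVec]

theorem dissipation_of_lmiMatrix (hLMI : (-lmiMatrix A B C D P ρ μ lam).PosSemidef) (e : m → ℝ)
    (w : p → ℝ) :
    (A *ᵥ e + B *ᵥ w) ⬝ᵥ P *ᵥ (A *ᵥ e + B *ᵥ w) - ρ ^ 2 * (e ⬝ᵥ P *ᵥ e) +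
      supplyRate lam μ (C *ᵥ e + D • w) w ≤ 0 := by
  have h := hLMI.dotProduct_mulVec_nonneg (Sum.elim e w)
  rw [star_trivial, neg_mulVec, dotProduct_neg, sumElim_dotProduct_lmiMatrix_mulVec] at h
  linarith

theorem dissipation_kronecker_of_lmiMatrix {n : Type*} [Fintype n] [DecidableEq n]
    (hLMI : (-lmiMatrix A B C D P ρ μ lam).PosSemidef) (x : m × n → ℝ) (w : p × n → ℝ) :
    ((A ⊗ₖ (1 : Matrix n n ℝ)) *ᵥ x + (B ⊗ₖ (1 : Matrix n n ℝ)) *ᵥ w) ⬝ᵥ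
          (P ⊗ₖ (1 : Matrix n n ℝ)) *ᵥ
            ((A ⊗ₖ (1 : Matrix n n ℝ)) *ᵥ x + (B ⊗ₖ (1 : Matrix n n ℝ)) *ᵥ w) -
        ρ ^ 2 * (x ⬝ᵥ (P ⊗ₖ (1 : Matrix n n ℝ)) *ᵥ x) +
      supplyRate lam μ ((C ⊗ₖ (1 : Matrix n n ℝ)) *ᵥ x + D • w) w ≤ 0 := by
  rw [dotProduct_eq_sum_dotProduct_slices, dotProduct_eq_sum_dotProduct_slices x,
    supplyRate_eq_sum_slices, Finset.mul_sum, ← Finset.sum_sub_distrib, ← Finset.sum_add_distrib]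
  refine Finset.sum_nonpos fun i _ => ?_
  have hstate :
      (fun j => ((A ⊗ₖ (1 : Matrix n n ℝ)) *ᵥ x + (B ⊗ₖ (1 : Matrix n n ℝ)) *ᵥ w) (j, i)) =
        A *ᵥ (fun k => x (k, i)) + B *ᵥ (fun k => w (k, i)) := by
    ext; simp [kronecker_one_mulVec_apply]
  have houtput : (fun k => ((C ⊗ₖ (1 : Matrix n n ℝ)) *ᵥ x + D • w) (k, i)) =
      C *ᵥ (fun k => x (k, i)) + D • (fun k => w (k, i)) := by
    ext; simp [kronecker_one_mulVec_apply]
  rw [kronecker_one_mulVec_slice, kronecker_one_mulVec_slice, hstate, houtput]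
  exact dissipation_of_lmiMatrix A B C D P ρ μ lam hLMI _ _

end Dissipation

theorem lyapunov_decrease_of_LMI {n : ℕ}
    (A : Matrix (Fin 2) (Fin 2) ℝ) (B : Matrix (Fin 2) (Fin 1) ℝ)
    (C : Matrix (Fin 1) (Fin 2) ℝ) (D : ℝ)
    (P : Matrix (Fin 2) (Fin 2) ℝ)
    (ρ μ lam : ℝ)
    (hLMI : (-(fromBlocks (Aᵀ * P * A - ρ ^ 2 • P) (Aᵀ * P * B) (Bᵀ * P * A) (Bᵀ * P * B) +
      (fromBlocks C (D • (1 : Matrix (Fin 1) (Fin 1) ℝ)) 0 (1 : Matrix (Fin 1) (Fin 1) ℝ))ᵀ *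
      (fromBlocks (-lam • (1 : Matrix (Fin 1) (Fin 1) ℝ)) (1 : Matrix (Fin 1) (Fin 1) ℝ)
        (1 : Matrix (Fin 1) (Fin 1) ℝ) (-μ • (1 : Matrix (Fin 1) (Fin 1) ℝ))) *
      (fromBlocks C (D • (1 : Matrix (Fin 1) (Fin 1) ℝ)) 0 (1 : Matrix (Fin 1) (Fin 1) ℝ)))).PosSemidef)
    (φ φs : EuclideanSpace ℝ (Fin 2 × Fin n))
    (u us : EuclideanSpace ℝ (Fin n))
    (y ys : EuclideanSpace ℝ (Fin n))
    (hy : y = fun i => (C ⊗ₖ (1 : Matrix (Fin n) (Fin n) ℝ)).mulVec φ (0, i) + D * u i)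
    (hys : ys = fun i => (C ⊗ₖ (1 : Matrix (Fin n) (Fin n) ℝ)).mulVec φs (0, i) + D * us i)
    (hquad : -lam * ‖y - ys‖ ^ 2 + 2 * ⟪y - ys, u - us⟫_ℝ - μ * ‖u - us‖ ^ 2 ≥ 0)
    (hfix : (A ⊗ₖ (1 : Matrix (Fin n) (Fin n) ℝ)).mulVec φs +
      (B ⊗ₖ (1 : Matrix (Fin n) (Fin n) ℝ)).mulVec (fun p => us p.2) = φs)
    (φp : EuclideanSpace ℝ (Fin 2 × Fin n))
    (hφp : φp = (A ⊗ₖ (1 : Matrix (Fin n) (Fin n) ℝ)).mulVec φ +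
      (B ⊗ₖ (1 : Matrix (Fin n) (Fin n) ℝ)).mulVec (fun p => u p.2)) :
    (φp - φs) ⬝ᵥ (P ⊗ₖ (1 : Matrix (Fin n) (Fin n) ℝ)).mulVec (φp - φs) ≤
      ρ ^ 2 * ((φ - φs) ⬝ᵥ (P ⊗ₖ (1 : Matrix (Fin n) (Fin n) ℝ)).mulVec (φ - φs)) := by
  have hstep : (φp - φs).ofLp = (A ⊗ₖ (1 : Matrix (Fin n) (Fin n) ℝ)) *ᵥ (φ - φs).ofLp +
      (B ⊗ₖ (1 : Matrix (Fin n) (Fin n) ℝ)) *ᵥ fun q => (u - us) q.2 := by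
    have hinput : (fun q : Fin 1 × Fin n => (u - us) q.2) = (fun q => u q.2) - fun q => us q.2 :=
      rfl
    rw [WithLp.ofLp_sub, WithLp.ofLp_sub, hφp, hinput, mulVec_sub, mulVec_sub]
    linear_combination hfix
  have houtput : (C ⊗ₖ (1 : Matrix (Fin n) (Fin n) ℝ)) *ᵥ (φ - φs).ofLp +
      D • (fun q : Fin 1 × Fin n => (u - us) q.2) = fun q => (y - ys) q.2 := by
    ext ⟨j, i⟩
    obtain rfl := Subsingleton.elim j 0
    simp [hy, hys, mulVec_sub]
    ring
  have h := dissipation_kronecker_of_lmiMatrix A B C D P ρ μ lam hLMI (φ - φs).ofLp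
    (fun q : Fin 1 × Fin n => (u - us) q.2)
  rw [← hstep, houtput, supplyRate_comp_snd, supplyRate_ofLp] at h
  rw [← WithLp.ofLp_sub (x := φp), ← WithLp.ofLp_sub (x := φ)]
  linarith
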